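/- arXiv:1304.4218 — 2 statements merged into one kernel-verified Lean document; each statement's English description precedes it below -/
import Mathlib

section
/- Let 1/6 ≤ q < 2/11. Then the achievement set of the multigeometric sequence (3,2,2,2; q) has nonempty interior and is not a finite union of closed intervals (hence is a Cantorval). -/
open Set

/-- The achievement set of a sequence: all subsums. -/
noncomputable def achievementSet (x : ℕ → ℝ) : Set ℝ :=
  {y | ∃ A : Set ℕ, y = ∑' n, A.indicator x n}


/-- The multigeometric sequence (k 0, …, k m ; q): term (j*(m+1)+r) is k r * q^j. -/
noncomputable def mgSeq (m : ℕ) (k : Fin (m + 1) → ℝ) (q : ℝ) (n : ℕ) : ℝ :=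
  k ⟨n % (m + 1), Nat.mod_lt _ (Nat.succ_pos m)⟩ * q ^ (n / (m + 1))


/-- A set is a finite union of closed intervals. -/
def IsFinUnionClosedIntervals (S : Set ℝ) : Prop :=
  ∃ (n : ℕ) (a b : Fin n → ℝ), S = ⋃ i, Set.Icc (a i) (b i)

/-!
Grouping the terms in blocks of four, the achievement set is the set of sums `∑ dⱼ qʲ` whose
digits `dⱼ` are subsums of `{3, 2, 2, 2}`, i.e. lie in `{0, 2, 3, 4, 5, 6, 7, 9}`. Since all the
digits `2, …, 7` are available and `q ≥ 1/6`, a greedy expansion in base `1/q` shows that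
`[2/(1-q), 7/(1-q)]` lies in the set. At its maximum `S = 9/(1-q)` the digits jump from `7` to `9`:
a sum whose first `j + 1` digits are `9` is at least `S - 9 q^(j+1)/(1-q)`, any other is at most
`S - 2 qʲ`, and for `q < 2/11` this leaves a gap below `S` at every scale. The points `S - S qⁿ`
(digits `9`, then `0`) also accumulate at `S` from the left, which no finite union of closed
intervals allows.
-/

open Filter Topology

def digitSums (D : Set ℝ) (q : ℝ) : Set ℝ :=
  {x | ∃ d : ℕ → ℝ, (∀ j, d j ∈ D) ∧ HasSum (fun j => d j * q ^ j) x}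

lemma digitSums_mono {D D' : Set ℝ} {q : ℝ} (h : D ⊆ D') : digitSums D q ⊆ digitSums D' q :=
  fun _ ⟨d, hd, hsum⟩ => ⟨d, fun j => h (hd j), hsum⟩

section MultigeometricDigits

variable {m : ℕ} {k : Fin (m + 1) → ℝ} {q : ℝ}

lemma mgSeq_divModEquiv_symm (j : ℕ) (r : Fin (m + 1)) :
    mgSeq m k q ((Nat.divModEquiv (m + 1)).symm (j, r)) = k r * q ^ j := by
  have hmod : (j * (m + 1) + r) % (m + 1) = r := by
    rw [Nat.mul_add_mod_of_lt r.is_lt]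
  have hdiv : (j * (m + 1) + r) / (m + 1) = j := by
    rw [Nat.add_comm, Nat.add_mul_div_right _ _ (Nat.succ_pos m), Nat.div_eq_of_lt r.is_lt,
      Nat.zero_add]
  simp only [mgSeq, Nat.divModEquiv_symm_apply, hmod, hdiv, Fin.eta]

lemma summable_mgSeq (hq : |q| < 1) : Summable (mgSeq m k q) := by
  rw [← (Nat.divModEquiv (m + 1)).symm.summable_iff]
  have hprod : Summable fun p : ℕ × Fin (m + 1) => q ^ p.1 * k p.2 :=
    summable_mul_of_summable_norm (by simpa using summable_geometric_of_lt_one (abs_nonneg q) hq)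
      .of_finite
  convert hprod using 1
  funext ⟨j, r⟩
  simp only [Function.comp_apply, mgSeq_divModEquiv_symm, mul_comm]

lemma hasSum_indicator_mgSeq (hq : |q| < 1) (s : ℕ → Finset (Fin (m + 1))) :
    HasSum (fun j => (∑ r ∈ s j, k r) * q ^ j)
      (∑' n, (Nat.divModEquiv (m + 1) ⁻¹' {p | p.2 ∈ s p.1}).indicator (mgSeq m k q) n) := by
  classical
  set e := Nat.divModEquiv (m + 1)
  have hsum := ((summable_mgSeq (k := k) hq).indicator (e ⁻¹' {p | p.2 ∈ s p.1})).hasSum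
  refine (e.symm.hasSum_iff.mpr hsum).prod_fiberwise fun j => ?_
  have hterm : ∀ r, (e ⁻¹' {p | p.2 ∈ s p.1}).indicator (mgSeq m k q) (e.symm (j, r)) =
      if r ∈ s j then k r * q ^ j else 0 := fun r => by
    split_ifs with hr
    · rw [Set.indicator_of_mem (by rwa [Set.mem_preimage, e.apply_symm_apply]),
        mgSeq_divModEquiv_symm]
    · exact Set.indicator_of_notMem (by rwa [Set.mem_preimage, e.apply_symm_apply]) _
  have hfiber : (∑ r ∈ s j, k r) * q ^ j =
      ∑ r, (e ⁻¹' {p | p.2 ∈ s p.1}).indicator (mgSeq m k q) (e.symm (j, r)) := by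
    rw [Finset.sum_mul, ← Finset.univ_inter (s j), ← Finset.sum_ite_mem]
    exact Finset.sum_congr rfl fun r _ => (hterm r).symm
  rw [hfiber]
  exact hasSum_fintype _

theorem achievementSet_mgSeq (hq : |q| < 1) :
    achievementSet (mgSeq m k q) =
      digitSums (range fun t : Finset (Fin (m + 1)) => ∑ r ∈ t, k r) q := by
  classical
  set e := Nat.divModEquiv (m + 1)
  ext x
  constructor
  · rintro ⟨A, rfl⟩
    set s : ℕ → Finset (Fin (m + 1)) := fun j => {r | e.symm (j, r) ∈ A}
    have hA : e ⁻¹' {p | p.2 ∈ s p.1} = A := by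
      ext n
      simp [s]
    exact ⟨_, fun j => ⟨s j, rfl⟩, hA ▸ hasSum_indicator_mgSeq hq s⟩
  · rintro ⟨d, hd, hx⟩
    choose s hs using hd
    obtain rfl : (fun j => ∑ r ∈ s j, k r) = d := funext hs
    exact ⟨e ⁻¹' {p | p.2 ∈ s p.1}, hx.unique (hasSum_indicator_mgSeq hq s)⟩

end MultigeometricDigits

lemma subset_digitSums {D I : Set ℝ} {q : ℝ} (hq : |q| < 1) (hI : Bornology.IsBounded I)
    (hstep : ∀ y ∈ I, ∃ e ∈ D, ∃ z ∈ I, y = e + q * z) : I ⊆ digitSums D q := by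
  intro y hy
  choose! e he z hz hyz using hstep
  obtain ⟨C, hC⟩ := hI.exists_norm_le
  set w : ℕ → ℝ := fun n => z^[n] y
  have hw : ∀ n, w n ∈ I := fun n => by
    induction n with
    | zero => exact hy
    | succ n ih => simpa only [w, Function.iterate_succ_apply'] using hz _ ih
  set u : ℕ → ℝ := fun n => q ^ n * w n
  have hu : Summable u := by
    refine .of_norm_bounded ((summable_geometric_of_lt_one (abs_nonneg q) hq).mul_left C) ?_
    intro n
    rw [norm_mul, norm_pow, Real.norm_eq_abs, mul_comm]
    exact mul_le_mul_of_nonneg_right (hC _ (hw n)) (pow_nonneg (abs_nonneg q) n)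
  have hdigit : ∀ n, e (w n) * q ^ n = u n - u (n + 1) := fun n => by
    have hwn : w (n + 1) = z (w n) := Function.iterate_succ_apply' z n y
    simp only [u, hwn]
    linear_combination (-q ^ n) * hyz _ (hw n)
  refine ⟨fun n => e (w n), fun n => he _ (hw n), ?_⟩
  have htele := hu.hasSum.sub ((summable_nat_add_iff 1).mpr hu).hasSum
  rw [hu.tsum_eq_zero_add, add_sub_cancel_right] at htele
  have hu0 : u 0 = y := by simp [u, w]
  rwa [← funext hdigit, hu0] at htele

section IntervalOfDigits

variable {q : ℝ}

lemma exists_nat_digit_step {N : ℕ} (hq : 1 ≤ (N + 1) * q) (hq1 : q < 1) {y : ℝ}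
    (hy : y ∈ Icc 0 (N / (1 - q))) :
    ∃ n ≤ N, ∃ z ∈ Icc 0 (N / (1 - q)), y = n + q * z := by
  have hq0 : 0 < q := pos_of_mul_pos_right (one_pos.trans_le hq) (by positivity)
  have h1q : 0 < 1 - q := by linarith
  obtain ⟨hy0, hyN⟩ := hy
  rw [le_div_iff₀ h1q] at hyN
  set n := min N ⌊y⌋₊
  have hny : (n : ℝ) ≤ y := (Nat.cast_le.mpr (min_le_right _ _)).trans (Nat.floor_le hy0)
  have hrem : (y - n) * (1 - q) ≤ N * q := by
    rcases le_total N ⌊y⌋₊ with hN | hN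
    · rw [show n = N from min_eq_left hN]
      linarith
    · rw [show n = ⌊y⌋₊ from min_eq_right hN]
      have hfrac : y - ⌊y⌋₊ < 1 := by linarith [Nat.lt_floor_add_one y]
      nlinarith
  refine ⟨n, min_le_left _ _, (y - n) / q, ⟨by positivity, ?_⟩, by field_simp; ring⟩
  rw [div_le_div_iff₀ hq0 h1q]
  linarith

theorem Icc_subset_digitSums {a : ℝ} {N : ℕ} (hq : 1 ≤ (N + 1) * q) (hq1 : q < 1) :
    Icc (a / (1 - q)) ((a + N) / (1 - q)) ⊆
      digitSums ((fun n : ℕ => a + n) '' Iic N) q := by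
  have hq0 : 0 < q := pos_of_mul_pos_right (one_pos.trans_le hq) (by positivity)
  have h1q : 0 < 1 - q := by linarith
  refine subset_digitSums (abs_lt.mpr ⟨by linarith, hq1⟩) (Metric.isBounded_Icc _ _) fun y hy => ?_
  rw [add_div] at hy ⊢
  have hfix : a / (1 - q) = a + q * (a / (1 - q)) := by field_simp; ring
  obtain ⟨n, hn, z, ⟨hz0, hzN⟩, hyz⟩ :=
    exists_nat_digit_step hq hq1 (y := y - a / (1 - q)) ⟨by linarith [hy.1], by linarith [hy.2]⟩
  exact ⟨a + n, mem_image_of_mem _ hn, z + a / (1 - q), ⟨by linarith, by linarith⟩,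
    by linear_combination hyz + hfix⟩

end IntervalOfDigits

lemma IsFinUnionClosedIntervals.eventually_nhdsLT {S : Set ℝ} (hS : IsFinUnionClosedIntervals S)
    {x : ℝ} (hx : ∃ᶠ y in 𝓝[<] x, y ∈ S) : ∀ᶠ y in 𝓝[<] x, y ∈ S := by
  obtain ⟨n, a, b, rfl⟩ := hS
  by_contra hnot
  have hout : ∀ i, ∀ᶠ y in 𝓝[<] x, y ∉ Icc (a i) (b i) := fun i => by
    rcases lt_or_ge (b i) x with hb | hb
    · filter_upwards [Ioo_mem_nhdsLT hb] with y hy hyi using hy.1.not_ge hyi.2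
    rcases lt_or_ge (a i) x with ha | ha
    · exact absurd (mem_of_superset (Ioo_mem_nhdsLT ha) <| Ioo_subset_Icc_self.trans <|
        (Icc_subset_Icc_right hb).trans (subset_iUnion (fun i => Icc (a i) (b i)) i)) hnot
    · filter_upwards [self_mem_nhdsWithin] with y hy hyi using (hy.trans_le ha).not_ge hyi.1
  obtain ⟨y, hyS, hy⟩ := (hx.and_eventually (eventually_all.mpr hout)).exists
  obtain ⟨i, hi⟩ := mem_iUnion.mp hyS
  exact hy i hi

lemma digitSums_gap {D : Set ℝ} {q K κ : ℝ} (hq0 : 0 ≤ q) (hq1 : q < 1) (hK : 0 ≤ K) (hκ : 0 ≤ κ)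
    (hD : ∀ e ∈ D, e = K ∨ e ∈ Icc 0 (K - κ)) {x : ℝ} (hx : x ∈ digitSums D q) (j : ℕ) :
    x ≤ K / (1 - q) - κ * q ^ j ∨ K / (1 - q) - K * q ^ (j + 1) / (1 - q) ≤ x := by
  obtain ⟨d, hd, hsum⟩ := hx
  have hgeom : ∀ c, HasSum (fun i => c * q ^ i) (c / (1 - q)) := fun c => by
    simpa only [div_eq_mul_inv] using (hasSum_geometric_of_lt_one hq0 hq1).mul_left c
  have hdef : HasSum (fun i => (K - d i) * q ^ i) (K / (1 - q) - x) := by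
    simpa only [sub_mul] using (hgeom K).sub hsum
  have hdef_mem : ∀ i, 0 ≤ K - d i ∧ K - d i ≤ K := fun i => by
    rcases hD _ (hd i) with h | h
    · simp [h, hK]
    · constructor <;> linarith [h.1, h.2]
  by_cases hall : ∀ i ≤ j, d i = K
  · right
    have hhead : ∑ i ∈ Finset.range (j + 1), (K - d i) * q ^ i = 0 :=
      Finset.sum_eq_zero fun i hi => by
        rw [hall i (Nat.lt_succ_iff.mp (Finset.mem_range.mp hi)), sub_self, zero_mul]
    have htail := (hasSum_nat_add_iff' (j + 1)).mpr hdef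
    rw [hhead, sub_zero] at htail
    have hbound : ∀ n, (K - d (n + (j + 1))) * q ^ (n + (j + 1)) ≤ K * q ^ (j + 1) * q ^ n :=
      fun n => calc
        _ ≤ K * q ^ (n + (j + 1)) :=
          mul_le_mul_of_nonneg_right (hdef_mem _).2 (pow_nonneg hq0 _)
        _ = K * q ^ (j + 1) * q ^ n := by ring
    linarith [hasSum_le hbound htail (hgeom _)]
  · left
    push Not at hall
    obtain ⟨i, hij, hi⟩ := hall
    have hdi : d i ≤ K - κ := ((hD _ (hd i)).resolve_left hi).2
    have hle := le_hasSum hdef i fun i' _ => mul_nonneg (hdef_mem i').1 (pow_nonneg hq0 _)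
    calc x ≤ K / (1 - q) - κ * q ^ i := by nlinarith [pow_nonneg hq0 i]
      _ ≤ K / (1 - q) - κ * q ^ j :=
        sub_le_sub_left (mul_le_mul_of_nonneg_left (pow_le_pow_of_le_one hq0 hq1.le hij) hκ) _

theorem not_isFinUnionClosedIntervals_digitSums {D : Set ℝ} {q K κ : ℝ} (hq0 : 0 < q)
    (hκ : 0 < κ) (hκK : κ ≤ K) (hgap : K * q < κ * (1 - q)) (h0 : 0 ∈ D) (hKD : K ∈ D)
    (hD : ∀ e ∈ D, e = K ∨ e ∈ Icc 0 (K - κ)) : ¬ IsFinUnionClosedIntervals (digitSums D q) := by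
  intro hS
  have hK : 0 < K := hκ.trans_le hκK
  have hq1 : q < 1 := by nlinarith
  have h1q : 0 < 1 - q := by linarith
  set S := K / (1 - q) with hS_def
  have htend : ∀ c > 0, Tendsto (fun n : ℕ => S - c * q ^ n) atTop (𝓝[<] S) := fun c hc =>
    tendsto_nhdsWithin_iff.mpr
      ⟨by simpa using ((tendsto_pow_atTop_nhds_zero_of_lt_one hq0.le hq1).const_mul c).const_sub S,
        .of_forall fun n => by simp only [mem_Iio, sub_lt_self_iff]; positivity⟩
  have hin : ∀ n : ℕ, S - S * q ^ n ∈ digitSums D q := fun n => by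
    refine ⟨fun i => if i < n then K else 0, fun i => by dsimp only; split_ifs <;> assumption, ?_⟩
    have hfin : ∑ i ∈ Finset.range n, (if i < n then K else 0) * q ^ i = S - S * q ^ n := by
      rw [Finset.sum_congr rfl fun i hi => by rw [if_pos (Finset.mem_range.mp hi)],
        ← Finset.mul_sum, geom_sum_eq hq1.ne, hS_def]
      field_simp [sub_ne_zero.mpr hq1.ne, h1q.ne']
      ring
    exact hfin ▸ hasSum_sum_of_ne_finset_zero fun i hi => by simp_all
  obtain ⟨c, hrc, hcκ⟩ := exists_between (show K * q / (1 - q) < κ by rwa [div_lt_iff₀ h1q])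
  have hout : ∀ n : ℕ, S - c * q ^ n ∉ digitSums D q := fun n hn => by
    have hqn := pow_pos hq0 n
    have hrn : K * q ^ (n + 1) / (1 - q) = K * q / (1 - q) * q ^ n := by ring
    rcases digitSums_gap hq0.le hq1 (hκ.le.trans hκK) hκ.le hD hn n with h | h
    · linarith [mul_lt_mul_of_pos_right hcκ hqn]
    · rw [hrn, ← hS_def] at h
      linarith [mul_lt_mul_of_pos_right hrc hqn]
  have hfreq_in : ∃ᶠ y in 𝓝[<] S, y ∈ digitSums D q :=
    (htend S (by positivity)).frequently (.of_forall hin)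
  have hfreq_out : ∃ᶠ y in 𝓝[<] S, y ∉ digitSums D q :=
    (htend c ((div_nonneg (mul_nonneg hK.le hq0.le) h1q.le).trans_lt hrc)).frequently
      (.of_forall hout)
  obtain ⟨y, hy_out, hy_in⟩ := (hfreq_out.and_eventually (hS.eventually_nhdsLT hfreq_in)).exists
  exact hy_out hy_in

lemma sum_eq_sum_univ_or_mem_Icc {ι : Type*} [Fintype ι] {k : ι → ℝ} {κ : ℝ} (hκ : 0 ≤ κ)
    (hk : ∀ i, κ ≤ k i) (t : Finset ι) :
    ∑ i ∈ t, k i = ∑ i, k i ∨ ∑ i ∈ t, k i ∈ Icc 0 (∑ i, k i - κ) := by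
  classical
  have hk0 : ∀ i, 0 ≤ k i := fun i => hκ.trans (hk i)
  by_cases ht : t = Finset.univ
  · exact .inl (by rw [ht])
  obtain ⟨i, hi⟩ : ∃ i, i ∉ t := by simpa [Finset.eq_univ_iff_forall] using ht
  refine .inr ⟨Finset.sum_nonneg fun i _ => hk0 i, ?_⟩
  calc ∑ j ∈ t, k j ≤ ∑ j ∈ Finset.univ.erase i, k j :=
        Finset.sum_le_sum_of_subset_of_nonneg
          (fun j hj => Finset.mem_erase.mpr ⟨ne_of_mem_of_not_mem hj hi, Finset.mem_univ j⟩)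
          fun j _ _ => hk0 j
    _ = ∑ j, k j - k i := Finset.sum_erase_eq_sub (Finset.mem_univ i)
    _ ≤ ∑ j, k j - κ := by linarith [hk i]

section Multigeometric

variable {m : ℕ} {k : Fin (m + 1) → ℝ} {q : ℝ}

theorem Icc_subset_achievementSet_mgSeq {a : ℝ} {N : ℕ} (hq : 1 ≤ (N + 1) * q) (hq1 : q < 1)
    (hk : ∀ n ≤ N, ∃ t : Finset (Fin (m + 1)), ∑ r ∈ t, k r = a + n) :
    Icc (a / (1 - q)) ((a + N) / (1 - q)) ⊆ achievementSet (mgSeq m k q) := by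
  have hq0 : 0 < q := pos_of_mul_pos_right (one_pos.trans_le hq) (by positivity)
  rw [achievementSet_mgSeq (abs_lt.mpr ⟨by linarith, hq1⟩)]
  refine (Icc_subset_digitSums hq hq1).trans (digitSums_mono ?_)
  rintro _ ⟨n, hn, rfl⟩
  exact hk n hn

theorem not_isFinUnionClosedIntervals_achievementSet_mgSeq {κ : ℝ} (hq0 : 0 < q) (hκ : 0 < κ)
    (hk : ∀ r, κ ≤ k r) (hgap : (∑ r, k r) * q < κ * (1 - q)) :
    ¬ IsFinUnionClosedIntervals (achievementSet (mgSeq m k q)) := by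
  have hκK : κ ≤ ∑ r, k r :=
    (hk 0).trans (Finset.single_le_sum (fun r _ => hκ.le.trans (hk r)) (Finset.mem_univ 0))
  have hq1 : q < 1 := by nlinarith
  rw [achievementSet_mgSeq (abs_lt.mpr ⟨by linarith, hq1⟩)]
  refine not_isFinUnionClosedIntervals_digitSums hq0 hκ hκK hgap ⟨∅, Finset.sum_empty⟩
    ⟨Finset.univ, rfl⟩ ?_
  rintro _ ⟨t, rfl⟩
  exact sum_eq_sum_univ_or_mem_Icc hκ.le hk t

end Multigeometric

lemma exists_subset_sum_3222 : ∀ n : ℕ, n ≤ 5 → ∃ t : Finset (Fin 4),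
    ∑ r ∈ t, (![3, 2, 2, 2] : Fin 4 → ℝ) r = 2 + n := by
  intro n hn
  interval_cases n
  exacts [⟨{1}, by simp⟩, ⟨{0}, by simp; norm_num⟩, ⟨{1, 2}, by simp⟩,
    ⟨{0, 1}, by simp; norm_num⟩, ⟨{1, 2, 3}, by simp; norm_num⟩, ⟨{0, 1, 2}, by simp; norm_num⟩]

theorem stmt16 (q : ℝ) (hq1 : 1 / 6 ≤ q) (hq2 : q < 2 / 11) :
    (interior (achievementSet (mgSeq 3 ![3, 2, 2, 2] q))).Nonempty ∧
    ¬ IsFinUnionClosedIntervals (achievementSet (mgSeq 3 ![3, 2, 2, 2] q)) := by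
  have hq0 : 0 < q := by linarith
  have hIcc : Icc (2 / (1 - q)) (7 / (1 - q)) ⊆ achievementSet (mgSeq 3 ![3, 2, 2, 2] q) := by
    have h := Icc_subset_achievementSet_mgSeq (N := 5) (by norm_num; linarith) (by linarith)
      exists_subset_sum_3222
    norm_num at h
    exact h
  refine ⟨?_, not_isFinUnionClosedIntervals_achievementSet_mgSeq hq0 two_pos
    (fun r => by fin_cases r <;> norm_num) (by simp [Fin.sum_univ_four]; linarith)⟩
  have hlt : 2 / (1 - q) < 7 / (1 - q) := div_lt_div_of_pos_right (by norm_num) (by linarith)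
  exact (nonempty_Ioo.mpr hlt).mono (interior_Icc.symm.subset.trans (interior_mono hIcc))
end

section
/- For every integer k ≥ 1, the achievement set of the multigeometric sequence (3, 2, …, 2; 1/(2k+2)) with k twos is not a finite union of closed intervals. -/
open Set

/-!
Let `b` be the smallest coefficient and `K` their sum, so that the series adds up to
`T = K / (1 - q)`. A subsum either contains a term of index `< (j + 1)(m + 1)`, and is then at
least `b q ^ j`, or it is a subsum of the tail, which is `q ^ (j + 1)` times the whole series, and is
then at most `q ^ (j + 1) T`. The condition `q (K + b) < b` is exactly `q ^ (j + 1) T < b q ^ j`, so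
each interval `(q ^ (j + 1) T, b q ^ j)` is a gap, and these gaps separate the points `b q ^ j` of
the achievement set from each other: no finite union of intervals can do that.
-/

theorem not_isFinUnionClosedIntervals_of_gaps {S : Set ℝ} {x t : ℕ → ℝ} (hx : Antitone x)
    (hxS : ∀ j, x j ∈ S) (htS : ∀ j, t j ∉ S) (ht : ∀ j, t j ∈ Icc (x (j + 1)) (x j)) :
    ¬ IsFinUnionClosedIntervals S := by
  rintro ⟨n, a, b, rfl⟩
  choose g hg using fun j => mem_iUnion.mp (hxS j)
  obtain ⟨j, j', hne, hgj⟩ := Finite.exists_ne_map_eq_of_infinite g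
  wlog hlt : j < j' generalizing j j'
  · exact this j' j hne.symm hgj.symm (hne.symm.lt_of_le (not_lt.mp hlt))
  refine htS j (mem_iUnion.mpr ⟨g j, ?_, (ht j).2.trans (hg j).2⟩)
  calc a (g j) = a (g j') := by rw [hgj]
    _ ≤ x j' := (hg j').1
    _ ≤ x (j + 1) := hx hlt
    _ ≤ t j := (ht j).1

section achievementSet

variable {x : ℕ → ℝ}

theorem apply_mem_achievementSet (n : ℕ) : x n ∈ achievementSet x :=
  ⟨{n}, by classical simp [Set.indicator_singleton]⟩

theorem le_tsum_add_or_exists_le_of_mem_achievementSet (hx0 : ∀ n, 0 ≤ x n) (hx : Summable x)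
    (N : ℕ) {y : ℝ} (hy : y ∈ achievementSet x) :
    y ≤ ∑' n, x (n + N) ∨ ∃ n < N, x n ≤ y := by
  obtain ⟨A, rfl⟩ := hy
  have hA : Summable (A.indicator x) := hx.indicator A
  by_cases hlow : ∃ n ∈ A, n < N
  · obtain ⟨n, hnA, hnN⟩ := hlow
    refine Or.inr ⟨n, hnN, ?_⟩
    simpa [indicator_of_mem hnA] using
      hA.le_tsum n fun m _ => indicator_apply_nonneg fun _ => hx0 m
  · push Not at hlow
    have hhead : ∑ i ∈ Finset.range N, A.indicator x i = 0 :=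
      Finset.sum_eq_zero fun i hi =>
        indicator_of_notMem (fun hiA => (hlow i hiA).not_gt (Finset.mem_range.mp hi)) x
    refine Or.inl ?_
    rw [← hA.sum_add_tsum_nat_add N, hhead, zero_add]
    exact ((summable_nat_add_iff N).mpr hA).tsum_le_tsum
      (fun n => indicator_le_self' (fun _ _ => hx0 _) _) ((summable_nat_add_iff N).mpr hx)

end achievementSet

section mgSeq

variable {m : ℕ} {c : Fin (m + 1) → ℝ} {q : ℝ}

theorem mgSeq_mul_add (j : ℕ) (i : Fin (m + 1)) : mgSeq m c q (j * (m + 1) + i) = c i * q ^ j := by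
  have hmod : (j * (m + 1) + i) % (m + 1) = i := by
    rw [Nat.mul_add_mod', Nat.mod_eq_of_lt i.isLt]
  have hdiv : (j * (m + 1) + i) / (m + 1) = j := by
    rw [mul_comm, Nat.mul_add_div m.succ_pos, Nat.div_eq_of_lt i.isLt, add_zero]
  simp only [mgSeq, hmod, hdiv]

theorem mgSeq_add_mul (n j : ℕ) : mgSeq m c q (n + j * (m + 1)) = q ^ j * mgSeq m c q n := by
  simp only [mgSeq, Nat.add_mul_mod_self_right, Nat.add_mul_div_right _ _ m.succ_pos, pow_add]
  ring

theorem mgSeq_nonneg (hc : ∀ i, 0 ≤ c i) (hq : 0 ≤ q) (n : ℕ) : 0 ≤ mgSeq m c q n :=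
  mul_nonneg (hc _) (pow_nonneg hq _)

theorem mul_pow_le_mgSeq {b : ℝ} (hb : 0 ≤ b) (hcb : ∀ i, b ≤ c i) (hq0 : 0 ≤ q) (hq1 : q ≤ 1)
    {n j : ℕ} (hn : n < (j + 1) * (m + 1)) : b * q ^ j ≤ mgSeq m c q n := by
  have hnj : n / (m + 1) ≤ j := Nat.lt_succ_iff.mp (Nat.div_lt_of_lt_mul (by linarith))
  calc b * q ^ j ≤ b * q ^ (n / (m + 1)) :=
        mul_le_mul_of_nonneg_left (pow_le_pow_of_le_one hq0 hq1 hnj) hb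
    _ ≤ mgSeq m c q n := mul_le_mul_of_nonneg_right (hcb _) (pow_nonneg hq0 _)

theorem hasSum_mgSeq (hq : ‖q‖ < 1) : HasSum (mgSeq m c q) ((1 - q)⁻¹ * ∑ i, c i) := by
  rw [← (Nat.divModEquiv (m + 1)).symm.hasSum_iff]
  have hcomp : mgSeq m c q ∘ (Nat.divModEquiv (m + 1)).symm = fun p => q ^ p.1 * c p.2 := by
    ext p
    simp [Nat.divModEquiv, mgSeq_mul_add, mul_comm]
  rw [hcomp]
  exact (hasSum_geometric_of_norm_lt_one hq).mul (hasSum_fintype c)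
    (summable_mul_of_summable_norm
      ((summable_geometric_of_lt_one (norm_nonneg q) hq).congr fun n => (norm_pow q n).symm)
      Summable.of_finite)

theorem le_or_le_of_mem_achievementSet_mgSeq {b : ℝ} (hb : 0 ≤ b) (hcb : ∀ i, b ≤ c i)
    (hq0 : 0 ≤ q) (hq1 : q < 1) (j : ℕ) {y : ℝ} (hy : y ∈ achievementSet (mgSeq m c q)) :
    y ≤ q ^ (j + 1) * ((1 - q)⁻¹ * ∑ i, c i) ∨ b * q ^ j ≤ y := by
  have hsum := hasSum_mgSeq (c := c) (by rwa [Real.norm_of_nonneg hq0])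
  have hc : ∀ i, 0 ≤ c i := fun i => hb.trans (hcb i)
  rcases le_tsum_add_or_exists_le_of_mem_achievementSet (mgSeq_nonneg hc hq0) hsum.summable
    ((j + 1) * (m + 1)) hy with htail | ⟨n, hn, hny⟩
  · left
    simpa only [mgSeq_add_mul, tsum_mul_left, hsum.tsum_eq] using htail
  · exact Or.inr ((mul_pow_le_mgSeq hb hcb hq0 hq1.le hn).trans hny)

theorem not_isFinUnionClosedIntervals_achievementSet_mgSeq_s18 (i₀ : Fin (m + 1))
    (hmin : ∀ i, c i₀ ≤ c i) (hc : 0 < c i₀) (hq0 : 0 < q) (hq : q * (∑ i, c i + c i₀) < c i₀) :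
    ¬ IsFinUnionClosedIntervals (achievementSet (mgSeq m c q)) := by
  set b := c i₀
  set K := ∑ i, c i
  have hbK : b ≤ K := Finset.single_le_sum (fun i _ => hc.le.trans (hmin i)) (Finset.mem_univ i₀)
  have hq1 : q < 1 := by nlinarith
  have hT : (1 - q)⁻¹ * K = K / (1 - q) := by rw [inv_mul_eq_div]
  have hbT : b ≤ (1 - q)⁻¹ * K := by
    rw [hT, le_div_iff₀ (by linarith)]
    nlinarith
  have hqT : q * ((1 - q)⁻¹ * K) < b := by
    rw [hT, mul_div_assoc', div_lt_iff₀ (by linarith)]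
    linarith
  have hgap : ∀ j, q ^ (j + 1) * ((1 - q)⁻¹ * K) < b * q ^ j := fun j => by
    rw [pow_succ, mul_assoc, mul_comm b]
    exact mul_lt_mul_of_pos_left hqT (pow_pos hq0 j)
  refine not_isFinUnionClosedIntervals_of_gaps (x := fun j => b * q ^ j)
    (t := fun j => (q ^ (j + 1) * ((1 - q)⁻¹ * K) + b * q ^ j) / 2)
    (fun i j hij => mul_le_mul_of_nonneg_left (pow_le_pow_of_le_one hq0.le hq1.le hij) hc.le)
    (fun j => mgSeq_mul_add (q := q) j i₀ ▸ apply_mem_achievementSet _) (fun j ht => ?_)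
    (fun j => ⟨?_, by linarith [hgap j]⟩)
  · rcases le_or_le_of_mem_achievementSet_mgSeq hc.le hmin hq0.le hq1 j ht with h | h <;>
      linarith [hgap j]
  · have hnext : b * q ^ (j + 1) ≤ q ^ (j + 1) * ((1 - q)⁻¹ * K) := by
      rw [mul_comm]
      exact mul_le_mul_of_nonneg_left hbT (pow_nonneg hq0.le _)
    linarith [hgap j]

end mgSeq

theorem stmt18 (k : ℕ) (hk : 1 ≤ k) :
    ¬ IsFinUnionClosedIntervals
      (achievementSet (mgSeq k (fun i => if i.val = 0 then (3 : ℝ) else 2)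
        (1 / (2 * k + 2 : ℝ)))) := by
  have hsum : ∑ i : Fin (k + 1), (if i.val = 0 then (3 : ℝ) else 2) = 2 * k + 3 := by
    rw [Fin.sum_univ_succ]
    simp only [Fin.val_zero, Fin.val_succ, if_true, Nat.succ_ne_zero, if_false,
      Finset.sum_const, Finset.card_univ, Fintype.card_fin, nsmul_eq_mul]
    ring
  refine not_isFinUnionClosedIntervals_achievementSet_mgSeq_s18 ⟨1, by omega⟩
    (fun i => by simp only [one_ne_zero, if_false]; split_ifs <;> norm_num) (by norm_num)
    (by positivity) ?_
  have hk' : (1 : ℝ) ≤ k := by exact_mod_cast hk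
  simp only [hsum, one_ne_zero, if_false]
  rw [one_div_mul_eq_div, div_lt_iff₀ (by positivity)]
  linarith
end
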